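/- arXiv:2202.11032 — 4 statements merged into one kernel-verified Lean document; each statement's English description precedes it below -/
import Mathlib

section
/- Let p be an odd prime, n a positive integer, and i an integer with 0 ≤ i < n such that p·(n/gcd(i,n)) is odd (equivalently, n/gcd(i,n) is odd). Then the monomial X^{p^i+1} is planar over the finite field with p^n elements. -/
lemma aux_bezout (i n : ℕ) (hi : 0 < i) (hn : 0 < n) :
    ∃ k m : ℕ, i * k = Nat.gcd i n + n * m := by
  have hbez := Nat.gcd_eq_gcd_ab i n
  set a := Nat.gcdA i n with ha
  set d := Nat.gcd i n with hd
  have hc0 : 0 ≤ a % n := Int.emod_nonneg a (by exact_mod_cast hn.ne')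
  set k : ℕ := (a % n).toNat + n with hk
  have hkz : (k : ℤ) = a % n + n := by
    push_cast [hk]; rw [Int.toNat_of_nonneg hc0]
  have key : (i * k : ℤ) - d = n * (i * (1 - a / n) - Nat.gcdB i n) := by
    rw [hbez, hkz, Int.emod_def]
    ring
  have hle : d ≤ i * k := by
    have h1 : d ≤ n := Nat.le_of_dvd hn (Nat.gcd_dvd_right i n)
    have h2 : n ≤ k := by omega
    calc d ≤ n := h1
    _ ≤ k := h2
    _ ≤ i * k := Nat.le_mul_of_pos_left k hi
  have hdvd : (n : ℤ) ∣ ((i * k - d : ℕ) : ℤ) := by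
    rw [Int.ofNat_sub hle]
    exact ⟨(i:ℤ) * (1 - a / n) - Nat.gcdB i n, by push_cast; linear_combination key⟩
  have hdvd' : n ∣ (i * k - d) := Int.natCast_dvd_natCast.mp hdvd
  obtain ⟨m, hm⟩ := hdvd'
  exact ⟨k, m, by omega⟩

theorem stmt_3 (p n : ℕ) (hp : p.Prime) (hodd : Odd p) (hn : 0 < n)
    (i : ℕ) (hi : i < n) (h : Odd (p * (n / Nat.gcd i n)))
    (F : Type*) [Field F] [Fintype F] (hF : Fintype.card F = p ^ n) :
    ∀ a : F, a ≠ 0 →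
      Function.Bijective (fun x : F => (x + a) ^ (p ^ i + 1) - x ^ (p ^ i + 1)) := by
  haveI : Fact p.Prime := ⟨hp⟩
  -- characteristic
  obtain ⟨p', hchar⟩ := CharP.exists F
  haveI := hchar
  have hp' : p'.Prime := CharP.char_is_prime F p'
  obtain ⟨m, -, hm⟩ := FiniteField.card F p'
  have hpp' : p = p' := by
    have h1 : p ∣ p' ^ (m : ℕ) := by
      rw [← hm, hF]; exact dvd_pow_self p hn.ne'
    exact (Nat.prime_dvd_prime_iff_eq hp hp').mp (hp.dvd_of_dvd_pow h1)
  subst hpp'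
  -- basic facts
  have hpne2 : p ≠ 2 := by
    rintro rfl
    exact (by decide : ¬ Odd 2) hodd
  have h2ne : (2 : F) ≠ 0 := by
    intro h0
    have hc : ((2 : ℕ) : F) = 0 := by exact_mod_cast h0
    have := (CharP.cast_eq_zero_iff F p 2).mp hc
    exact hpne2 ((Nat.prime_dvd_prime_iff_eq hp Nat.prime_two).mp this)
  have hneg_fix : ∀ x : F, x = -x → x = 0 := by
    intro x hx
    have h2 : (2 : F) * x = 0 := by rw [two_mul]; linear_combination hx
    exact (mul_eq_zero.mp h2).resolve_left h2ne
  have hq : ∀ x : F, x ^ (p ^ n) = x := fun x => by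
    rw [← hF]; exact FiniteField.pow_card x
  have hodd_nd : Odd (n / Nat.gcd i n) := (Nat.odd_mul.mp h).2
  -- no solution to w^(p^i) = -w with w ≠ 0
  have hnosol : ∀ w : F, w ≠ 0 → w ^ (p ^ i) ≠ -w := by
    intro w hw hww
    have hoddpow : ∀ j : ℕ, Odd (p ^ j) := fun j => hodd.pow
    rcases Nat.eq_zero_or_pos i with hi0 | hipos
    · subst hi0
      simp only [pow_zero, pow_one] at hww
      exact hw (hneg_fix w hww)
    set d := Nat.gcd i n with hd
    have hdn : d ∣ n := Nat.gcd_dvd_right i n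
    have hdi : d ∣ i := Nat.gcd_dvd_left i n
    have key1 : ∀ k : ℕ, w ^ (p ^ (i * k)) = (-1) ^ k * w := by
      intro k
      induction k with
      | zero => simp
      | succ k ih =>
        have he : i * (k + 1) = i * k + i := by ring
        rw [he, pow_add, pow_mul, ih, mul_pow, pow_right_comm,
          (hoddpow i).neg_one_pow, hww, pow_succ]
        ring
    have key2 : ∀ r s : ℕ, w ^ (p ^ (r + n * s)) = w ^ (p ^ r) := by
      intro r s
      induction s with
      | zero => simp
      | succ s ih =>
        have he : r + n * (s + 1) = (r + n * s) + n := by ring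
        rw [he, pow_add, pow_mul, hq, ih]
    obtain ⟨k, m', hkm⟩ := aux_bezout i n hipos hn
    have hdkey : w ^ (p ^ d) = (-1) ^ k * w := by
      have h2 := key2 d m'
      rw [← hkm] at h2
      rw [← h2, key1]
    set ε : F := (-1) ^ k with hε
    have hεcases : ε = 1 ∨ ε = -1 := neg_one_pow_eq_or F k
    have hεpow : ∀ j : ℕ, ε ^ (p ^ j) = ε := by
      intro j
      rcases hεcases with h1 | h1 <;> rw [h1]
      · exact one_pow _
      · exact (hoddpow j).neg_one_pow
    have key3 : ∀ s : ℕ, w ^ (p ^ (d * s)) = ε ^ s * w := by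
      intro s
      induction s with
      | zero => simp
      | succ s ih =>
        have he : d * (s + 1) = d * s + d := by ring
        rw [he, pow_add, pow_mul, ih, mul_pow, pow_right_comm, hεpow, hdkey,
          pow_succ]
        ring
    have hn_eq : d * (n / d) = n := Nat.mul_div_cancel' hdn
    have hfix : ε ^ (n / d) * w = w := by
      rw [← key3, hn_eq, hq]
    have hε1 : ε = 1 := by
      rcases hεcases with h1 | h1
      · exact h1
      · exfalso
        rw [h1, hodd_nd.neg_one_pow] at hfix
        exact hw (hneg_fix w (by linear_combination -hfix))
    have hwd : w ^ (p ^ i) = w := by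
      have h3 := key3 (i / d)
      rw [Nat.mul_div_cancel' hdi, hε1, one_pow, one_mul] at h3
      exact h3
    rw [hwd] at hww
    exact hw (hneg_fix w hww)
  -- main argument
  intro a ha
  rw [Fintype.bijective_iff_injective_and_card]
  refine ⟨?_, rfl⟩
  intro x y hxy
  simp only at hxy
  have expand : ∀ z : F, (z + a) ^ (p ^ i + 1) - z ^ (p ^ i + 1)
      = a * z ^ (p ^ i) + a ^ (p ^ i) * z + a ^ (p ^ i) * a := by
    intro z
    rw [pow_succ, pow_succ, add_pow_char_pow]
    ring
  rw [expand, expand] at hxy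
  by_contra hne
  have hz : x - y ≠ 0 := sub_ne_zero.mpr hne
  set z := x - y with hzdef
  have hlin : a * z ^ (p ^ i) + a ^ (p ^ i) * z = 0 := by
    rw [hzdef, sub_pow_char_pow]
    linear_combination hxy
  have hw : (z / a) ^ (p ^ i) = -(z / a) := by
    rw [div_pow, ← neg_div, div_eq_div_iff (pow_ne_zero _ ha) ha]
    linear_combination hlin
  exact hnosol (z / a) (div_ne_zero hz ha) hw
end

section
/- Let n be a positive integer and i an integer with 2 < i < n and gcd(i, 2n) = 1. Then the monomial X^e with e = (3^i + 1)/2 is planar over the finite field with 3^n elements. -/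
/-!
Write e = (3^i + 1)/2, m = (3^i - 1)/2 and G(y) = (y + 1)^e - (y - 1)^e. In characteristic 3,
(x + a)^e - x^e = -a^e G(x/a - 1), so it suffices that G is injective on F = 𝔽_{3^n}.
Over the algebraic closure write y = z + z⁻¹ and z = t². Then y + 1 = (t - t⁻¹)² and
y - 1 = (t + t⁻¹)², and since 2e = 3^i + 1 is a Frobenius power plus one, G(y) = z^m + z^{-m}.
If y ∈ 𝔽_{3^n} then z ∈ 𝔽_{3^{2n}}, and m is coprime to 3^{2n} - 1 because gcd(i, 2n) = 1 and
m is odd. So G(y₁) = G(y₂) forces z₁^m = z₂^{±m}, hence z₁ = z₂^{±1} and y₁ = y₂.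
-/

theorem Nat.odd_three_pow_sub_one_div_two {i : ℕ} (hi : Odd i) : Odd ((3 ^ i - 1) / 2) := by
  have h : 3 ^ i % 4 = 3 := by
    obtain ⟨j, rfl⟩ := hi
    rw [pow_succ, pow_mul, Nat.mul_mod, Nat.pow_mod]
    norm_num
  rw [Nat.odd_iff]
  generalize 3 ^ i = x at h ⊢
  omega

theorem Nat.coprime_three_pow_sub_one_div_two {i k : ℕ} (hik : i.Coprime k) (hk : Even k) :
    ((3 ^ i - 1) / 2).Coprime (3 ^ k - 1) := by
  have hi : Odd i := Nat.odd_iff.2 <| by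
    by_contra h
    have : 2 ∣ i.gcd k := Nat.dvd_gcd (by omega) hk.two_dvd
    rw [hik] at this
    omega
  have hg2 : ((3 ^ i - 1) / 2).gcd (3 ^ k - 1) ∣ 2 := by
    have h : (3 ^ i - 1).gcd (3 ^ k - 1) = 2 := by simp [hik]
    exact (Nat.gcd_dvd_gcd_of_dvd_left _ (Nat.div_dvd_of_dvd
      (Nat.Odd.sub_odd ((by decide : Odd 3).pow) odd_one).two_dvd)).trans h.dvd
  have hg_odd := (Nat.odd_three_pow_sub_one_div_two hi).of_dvd_nat (Nat.gcd_dvd_left _ (3 ^ k - 1))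
  exact ((Nat.dvd_prime Nat.prime_two).1 hg2).resolve_right fun h => by
    rw [h] at hg_odd; exact absurd hg_odd (by decide)

theorem eq_or_mul_eq_one_of_add_inv_eq {K : Type*} [Field K] {a b : K} (ha : a ≠ 0) (hb : b ≠ 0)
    (h : a + a⁻¹ = b + b⁻¹) : a = b ∨ a * b = 1 := by
  have h' : (a - b) * (a * b - 1) = 0 := by
    field_simp at h
    linear_combination h
  exact (mul_eq_zero.1 h').imp sub_eq_zero.1 sub_eq_zero.1

open Polynomial in
theorem IsAlgClosed.exists_add_inv_eq {K : Type*} [Field K] [IsAlgClosed K] (y : K) :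
    ∃ z : K, z ≠ 0 ∧ z + z⁻¹ = y := by
  obtain ⟨z, hz⟩ := IsAlgClosed.exists_root (C 1 * X ^ 2 + C (-y) * X + C 1)
    (by rw [degree_quadratic one_ne_zero]; decide)
  simp only [IsRoot, eval_add, eval_mul, eval_C, eval_pow, eval_X] at hz
  have hz0 : z ≠ 0 := by rintro rfl; simp at hz
  exact ⟨z, hz0, by field_simp; linear_combination hz⟩

theorem pow_expChar_pow_two_mul_eq_self {K : Type*} [Field K] {p : ℕ} [ExpChar K p] {z : K}
    (hz : z ≠ 0) {n : ℕ} (hy : (z + z⁻¹) ^ p ^ n = z + z⁻¹) : z ^ p ^ (2 * n) = z := by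
  obtain ⟨w, hw⟩ : ∃ w, z ^ p ^ n = w := ⟨_, rfl⟩
  have hw' : w + w⁻¹ = z + z⁻¹ := by rw [← hw, ← inv_pow, ← add_pow_expChar_pow, hy]
  have hsq : z ^ p ^ (2 * n) = w ^ p ^ n := by rw [← hw, ← pow_mul, ← pow_add, two_mul]
  rcases eq_or_mul_eq_one_of_add_inv_eq (hw ▸ pow_ne_zero _ hz) hz hw' with rfl | h
  · rw [hsq, hw]
  · rw [hsq, eq_inv_of_mul_eq_one_left h, inv_pow, hw, eq_inv_of_mul_eq_one_left h, inv_inv]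

theorem add_inv_eq_of_pow_add_inv_eq {K : Type*} [Field K] {m N : ℕ} (hmN : m.Coprime N)
    {z₁ z₂ : K} (hz₁0 : z₁ ≠ 0) (hz₂0 : z₂ ≠ 0) (hz₁ : z₁ ^ N = 1) (hz₂ : z₂ ^ N = 1)
    (h : z₁ ^ m + (z₁ ^ m)⁻¹ = z₂ ^ m + (z₂ ^ m)⁻¹) : z₁ + z₁⁻¹ = z₂ + z₂⁻¹ := by
  rcases eq_or_mul_eq_one_of_add_inv_eq (pow_ne_zero m hz₁0) (pow_ne_zero m hz₂0) h with h | h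
  · have : z₁ * z₂⁻¹ = 1 := (pow_eq_one_iff_of_coprime hmN).1
      ⟨by rw [mul_pow, h, inv_pow, mul_inv_cancel₀ (pow_ne_zero m hz₂0)],
        by rw [mul_pow, hz₁, inv_pow, hz₂, inv_one, mul_one]⟩
    rw [(mul_inv_eq_one₀ hz₂0).1 this]
  · have : z₁ * z₂ = 1 := (pow_eq_one_iff_of_coprime hmN).1
      ⟨by rw [mul_pow, h], by rw [mul_pow, hz₁, hz₂, mul_one]⟩
    rw [eq_inv_of_mul_eq_one_right this, inv_inv, add_comm]

section CharThree

variable {K : Type*} [Field K] [CharP K 3] {i e m : ℕ}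

theorem add_one_pow_sub_sub_one_pow_of_sq {z t : K} (ht : t ≠ 0) (hz : t ^ 2 = z)
    (he : 2 * e = 3 ^ i + 1) (hm : 2 * m + 1 = 3 ^ i) :
    (z + z⁻¹ + 1) ^ e - (z + z⁻¹ - 1) ^ e = z ^ m + (z ^ m)⁻¹ := by
  subst hz
  have h3 : (3 : K) = 0 := CharP.cast_eq_zero K 3
  have hplus : t ^ 2 + (t ^ 2)⁻¹ + 1 = (t - t⁻¹) ^ 2 := by
    field_simp
    linear_combination t ^ 2 * h3
  have hminus : t ^ 2 + (t ^ 2)⁻¹ - 1 = (t + t⁻¹) ^ 2 := by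
    field_simp
    linear_combination -t ^ 2 * h3
  have hfrob : t ^ 3 ^ i = (t ^ 2) ^ m * t := by rw [← pow_mul, ← pow_succ, hm]
  rw [hplus, hminus, ← pow_mul, ← pow_mul, he, pow_succ, pow_succ, sub_pow_char_pow,
    add_pow_char_pow, inv_pow, hfrob]
  calc _ = -2 * ((t ^ 2) ^ m + ((t ^ 2) ^ m)⁻¹) := by field_simp; ring
    _ = _ := by linear_combination -((t ^ 2) ^ m + ((t ^ 2) ^ m)⁻¹) * h3

theorem exists_add_inv_eq_of_pow_three_pow_eq_self [IsAlgClosed K] {n : ℕ}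
    (he : 2 * e = 3 ^ i + 1) (hm : 2 * m + 1 = 3 ^ i) {y : K} (hy : y ^ 3 ^ n = y) :
    ∃ z : K, z ≠ 0 ∧ z ^ (3 ^ (2 * n) - 1) = 1 ∧ z + z⁻¹ = y ∧
      (y + 1) ^ e - (y - 1) ^ e = z ^ m + (z ^ m)⁻¹ := by
  obtain ⟨z, hz, rfl⟩ := IsAlgClosed.exists_add_inv_eq y
  obtain ⟨t, ht⟩ := IsAlgClosed.exists_pow_nat_eq z two_pos
  refine ⟨z, hz, ?_, rfl, add_one_pow_sub_sub_one_pow_of_sq (by rintro rfl; simp_all) ht he hm⟩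
  rw [← mul_left_inj' hz, ← pow_succ, Nat.sub_add_cancel (Nat.one_le_pow _ _ three_pos), one_mul]
  exact pow_expChar_pow_two_mul_eq_self hz hy

theorem injOn_add_one_pow_sub_sub_one_pow [IsAlgClosed K] {n : ℕ}
    (he : 2 * e = 3 ^ i + 1) (hm : 2 * m + 1 = 3 ^ i) (hmn : m.Coprime (3 ^ (2 * n) - 1)) :
    Set.InjOn (fun y : K => (y + 1) ^ e - (y - 1) ^ e) {y | y ^ 3 ^ n = y} := by
  intro y₁ hy₁ y₂ hy₂ h
  obtain ⟨z₁, hz₁0, hz₁, rfl, hG₁⟩ := exists_add_inv_eq_of_pow_three_pow_eq_self he hm hy₁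
  obtain ⟨z₂, hz₂0, hz₂, rfl, hG₂⟩ := exists_add_inv_eq_of_pow_three_pow_eq_self he hm hy₂
  simp only at h
  exact add_inv_eq_of_pow_add_inv_eq hmn hz₁0 hz₂0 hz₁ hz₂ (hG₁ ▸ hG₂ ▸ h)

theorem add_pow_sub_pow_eq_neg_mul {a : K} (ha : a ≠ 0) (x : K) :
    (x + a) ^ e - x ^ e = -a ^ e * ((x / a - 1 + 1) ^ e - (x / a - 1 - 1) ^ e) := by
  have h3 : (3 : K) = 0 := CharP.cast_eq_zero K 3
  have hshift : x / a - 1 - 1 = (x + a) / a := by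
    field_simp
    linear_combination -a * h3
  rw [sub_add_cancel, hshift, div_pow, div_pow]
  field_simp
  ring

end CharThree

theorem FiniteField.injective_add_one_pow_sub_sub_one_pow {F : Type*} [Field F] [Fintype F]
    {n i e m : ℕ} (hF : Fintype.card F = 3 ^ n) (he : 2 * e = 3 ^ i + 1) (hm : 2 * m + 1 = 3 ^ i)
    (hmn : m.Coprime (3 ^ (2 * n) - 1)) :
    Function.Injective (fun y : F => (y + 1) ^ e - (y - 1) ^ e) := by
  have : CharP F 3 := charP_of_card_eq_prime_pow hF
  have hfix (y : F) : algebraMap F (AlgebraicClosure F) y ^ 3 ^ n = algebraMap F _ y := by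
    rw [← map_pow, ← hF, FiniteField.pow_card]
  intro y₁ y₂ h
  refine (algebraMap F (AlgebraicClosure F)).injective <|
    injOn_add_one_pow_sub_sub_one_pow he hm hmn (hfix y₁) (hfix y₂) ?_
  simpa using congrArg (algebraMap F (AlgebraicClosure F)) h

theorem stmt_4_general (n i : ℕ) (hgcd : Nat.gcd i (2 * n) = 1)
    (F : Type*) [Field F] [Fintype F] (hF : Fintype.card F = 3 ^ n) :
    ∀ a : F, a ≠ 0 →
      Function.Bijective
        (fun x : F => (x + a) ^ ((3 ^ i + 1) / 2) - x ^ ((3 ^ i + 1) / 2)) := by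
  intro a ha
  have : CharP F 3 := charP_of_card_eq_prime_pow hF
  obtain ⟨k, hk⟩ : Odd (3 ^ i) := (by decide : Odd 3).pow
  have he : 2 * ((3 ^ i + 1) / 2) = 3 ^ i + 1 := by omega
  have hm : 2 * ((3 ^ i - 1) / 2) + 1 = 3 ^ i := by omega
  have hG := FiniteField.injective_add_one_pow_sub_sub_one_pow hF he hm
    (Nat.coprime_three_pow_sub_one_div_two hgcd (even_two_mul n))
  rw [← Finite.injective_iff_bijective]
  intro x₁ x₂ h
  simp only [add_pow_sub_pow_eq_neg_mul ha] at h
  have h' := hG (mul_left_cancel₀ (neg_ne_zero.2 (pow_ne_zero _ ha)) h)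
  simpa [ha] using h'

theorem stmt_4 (n i : ℕ) (hn : 0 < n) (hi2 : 2 < i) (hin : i < n)
    (hgcd : Nat.gcd i (2 * n) = 1)
    (F : Type*) [Field F] [Fintype F] (hF : Fintype.card F = 3 ^ n) :
    ∀ a : F, a ≠ 0 →
      Function.Bijective
        (fun x : F => (x + a) ^ ((3 ^ i + 1) / 2) - x ^ ((3 ^ i + 1) / 2)) :=
  stmt_4_general n i hgcd F hF
end

section
/- Let p be an odd prime, n a positive integer, F the finite field with p^n elements, and k a positive integer. If the monomial X^k is planar over F, then gcd(k, p^n − 1) = 2. -/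
theorem stmt_6 (p n : ℕ) (hp : p.Prime) (hodd : Odd p) (hn : 0 < n)
    (F : Type*) [Field F] [Fintype F] (hF : Fintype.card F = p ^ n)
    (k : ℕ) (hk : 0 < k)
    (hplanar : ∀ a : F, a ≠ 0 → Function.Bijective (fun x : F => (x + a) ^ k - x ^ k)) :
    Nat.gcd k (p ^ n - 1) = 2 := by
  classical
  set q := p ^ n with hqdef
  have hq1 : 1 < q := Nat.one_lt_pow hn.ne' hp.one_lt
  have hinj := (hplanar 1 one_ne_zero).injective
  -- Step 1: k is even
  have hkeven : Even k := by
    by_contra h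
    have hkodd : Odd k := Nat.not_even_iff_odd.mp h
    have heq : ((0:F) + 1) ^ k - (0:F) ^ k = ((-1:F) + 1) ^ k - (-1:F) ^ k := by
      simp [zero_pow hk.ne', hkodd.neg_one_pow]
    have h01 : (0:F) = -1 := hinj heq
    have : (1:F) = 0 := by linear_combination h01
    exact one_ne_zero this
  -- q - 1 is even
  have hqodd : Odd q := hodd.pow
  have hq1even : Even (q - 1) := Nat.Odd.sub_odd hqodd odd_one
  set d := Nat.gcd k (q - 1) with hddef
  have hd2 : 2 ∣ d := Nat.dvd_gcd hkeven.two_dvd hq1even.two_dvd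
  have hdk : d ∣ k := Nat.gcd_dvd_left _ _
  have hdq : d ∣ q - 1 := Nat.gcd_dvd_right _ _
  have hdpos : 0 < d := Nat.gcd_pos_of_pos_left _ hk
  -- Step 2: d ≤ 2
  by_contra hne
  have hd3 : 2 < d := by omega
  have hq1pos : 0 < q - 1 := by omega
  -- find element c of order d in Fˣ
  obtain ⟨g, hg⟩ := IsCyclic.exists_generator (α := Fˣ)
  have hog : orderOf g = q - 1 := by
    rw [orderOf_eq_card_of_forall_mem_zpowers hg, Nat.card_eq_fintype_card,
      Fintype.card_units, hF]
  set c : Fˣ := g ^ ((q - 1) / d) with hcdef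
  have hoc : orderOf c = d := by
    rw [hcdef, orderOf_pow, hog, Nat.gcd_eq_right (Nat.div_dvd_of_dvd hdq),
      Nat.div_div_self hdq hq1pos.ne']
  have hck : c ^ k = 1 := by
    obtain ⟨m, hm⟩ := hdk
    rw [hm, pow_mul, ← hoc, pow_orderOf_eq_one, one_pow]
  have hc2 : c ^ 2 ≠ 1 := by
    intro h
    have := orderOf_dvd_of_pow_eq_one h
    rw [hoc] at this
    have := Nat.le_of_dvd (by norm_num) this
    omega
  set u : F := (c : F) with hudef
  have huk : u ^ k = 1 := by
    rw [hudef, ← Units.val_pow_eq_pow_val, hck, Units.val_one]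
  have hu1 : u - 1 ≠ 0 := by
    intro h
    have : u = 1 := by linear_combination h
    have : c = 1 := Units.ext (by simpa [hudef] using this)
    rw [this] at hoc
    simp at hoc
    omega
  have hui1 : (u⁻¹ : F) - 1 ≠ 0 := by
    intro h
    have hu0 : u ≠ 0 := c.ne_zero
    have : u⁻¹ = 1 := by linear_combination h
    have : u = 1 := by
      field_simp at this
      simpa using this.symm
    have : c = 1 := Units.ext (by simpa [hudef] using this)
    rw [this] at hoc
    simp at hoc
    omega
  have hu0 : u ≠ 0 := c.ne_zero
  set x : F := (u - 1)⁻¹ with hxdef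
  set x' : F := (u⁻¹ - 1)⁻¹ with hx'def
  have hx1 : x + 1 = x * u := by
    have h := inv_mul_cancel₀ hu1
    rw [hxdef]
    linear_combination -h
  have hx'1 : x' + 1 = x' * u⁻¹ := by
    have h := inv_mul_cancel₀ hui1
    rw [hx'def]
    linear_combination -h
  have hfx : (x + 1) ^ k - x ^ k = 0 := by
    rw [hx1, mul_pow, huk, mul_one, sub_self]
  have hfx' : (x' + 1) ^ k - x' ^ k = 0 := by
    have huik : (u⁻¹ : F) ^ k = 1 := by
      rw [inv_pow, huk, inv_one]
    rw [hx'1, mul_pow, huik, mul_one, sub_self]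
  have hxx' : x = x' := hinj (by simp only [hfx, hfx'])
  have huui : u - 1 = u⁻¹ - 1 := by
    have := hxx'
    rw [hxdef, hx'def] at this
    exact inv_injective this
  have hu2 : u ^ 2 = 1 := by
    have : u = u⁻¹ := by linear_combination huui
    field_simp at this
    linear_combination this
  exact hc2 (Units.ext (by simpa [hudef, ← Units.val_pow_eq_pow_val] using hu2))
end

section
/- Let p be an odd prime, n a positive integer, and F the finite field with p^n elements. If f, g : F → F are graph equivalent and f is planar, then g is planar. -/
theorem stmt_13 (p n : ℕ) (hp : p.Prime) (hodd : Odd p) (hn : 0 < n)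
    (F : Type*) [Field F] [Fintype F] (hF : Fintype.card F = p ^ n)
    (f g : F → F)
    (φ : (F × F) ≃ᵃ[F] (F × F))
    (hφ : (Set.range fun x : F => (x, g x)) = φ '' (Set.range fun x : F => (x, f x)))
    (hf : ∀ a : F, a ≠ 0 → Function.Bijective (fun x : F => f (x + a) - f x)) :
    ∀ a : F, a ≠ 0 → Function.Bijective (fun x : F => g (x + a) - g x) := by
  -- Key: the difference map on distinct points of the graph of f is injective
  have key : ∀ u v u' v' : F, u ≠ v → v - u = v' - u' → f v - f u = f v' - f u' →
      u = u' ∧ v = v' := by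
    intro u v u' v' huv h1 h2
    have ha' : v - u ≠ 0 := sub_ne_zero.mpr fun h => huv h.symm
    have hinj := (hf (v - u) ha').1
    have e1 : u + (v - u) = v := by ring
    have e2 : u' + (v - u) = v' := by rw [h1]; ring
    have huu : u = u' := hinj (by simp only [e1, e2]; exact h2)
    refine ⟨huu, ?_⟩
    rw [huu] at h1
    exact sub_left_inj.mp h1
  have hlin : ∀ P Q : F × F, φ.linear (P - Q) = φ P - φ Q := by
    intro P Q
    simpa [vsub_eq_sub] using φ.toAffineMap.linearMap_vsub P Q
  have hmem : ∀ x : F, ∃ u : F, φ (u, f u) = (x, g x) := by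
    intro x
    have : (x, g x) ∈ φ '' (Set.range fun x : F => (x, f x)) := by
      rw [← hφ]; exact ⟨x, rfl⟩
    obtain ⟨pt, ⟨u, hp'⟩, hpe⟩ := this
    exact ⟨u, by rw [show ((u, f u) : F × F) = pt from hp']; exact hpe⟩
  intro a ha
  rw [← Finite.injective_iff_bijective]
  intro x y hxy
  dsimp at hxy
  obtain ⟨u, hu⟩ := hmem x
  obtain ⟨u', hu'⟩ := hmem (x + a)
  obtain ⟨w, hw⟩ := hmem y
  obtain ⟨w', hw'⟩ := hmem (y + a)
  have hd' : φ.linear ((u', f u') - (u, f u)) = φ.linear ((w', f w') - (w, f w)) := by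
    rw [hlin, hlin, hu, hu', hw, hw']
    apply Prod.ext
    · simp
    · simpa using hxy
  have hd := φ.linear.injective hd'
  have hd1 : u' - u = w' - w := congrArg Prod.fst hd
  have hd2 : f u' - f u = f w' - f w := congrArg Prod.snd hd
  have hne : u ≠ u' := by
    intro h
    apply ha
    have heq : φ (u, f u) = φ (u', f u') := by rw [h]
    rw [hu, hu'] at heq
    have := congrArg Prod.fst heq
    simpa using this.symm
  obtain ⟨huw, -⟩ := key u u' w w' hne hd1 hd2
  have : (x, g x) = (y, g y) := by rw [← hu, ← hw, huw]
  exact congrArg Prod.fst this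
end
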